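/- Let 0 < p < 1, q = 1 − p, f(t) = q e^{−itp} + p e^{itq}, and σ = √(npq). Then for all integers n ≥ 2, ∫_{|t| ≤ π} |f(t)^n − e^{−npqt²/2}| dt < (1/σ²) · ( f(p,n) + π σ² e^{−σ²} + (4/π) e^{−π²σ²/8} ), where f(p,n) = (p² + q²) · (π⁴/96) · (n/(n−1))² + (3π⁵√(πpq)/(2^{10}√n)) · (n/(n−1))^{5/2}. -/

import Mathlib

/-!
Write `s = p(1 - p)`, `φ` for the characteristic function and `g(t) = e^{-st²/2}`, so that the
integrand is `|φ(t)ⁿ - g(t)ⁿ|`. It is even, and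
`|φ(t)|² = 1 - 2s(1 - cos t) ≤ e^{-2s(1 - cos t)}`.

On `[0, π/2]` we have `1 - cos t ≥ 4t²/π²`, so `φ(t)` and `g(t)` both lie in the disc of
radius `e^{-4st²/π²}`; telescoping `φⁿ - gⁿ` and the third-order Taylor bound
`|φ(t) - g(t)| ≤ s(p² + q²)|t|³/6 + s²t⁴/8` reduce this range to the Gaussian moments
`∫₀^∞ t^k e^{-At²} dt` with `A = 4(n - 1)s/π²`, given by the Gamma function.

On `[π/2, π]` we have `cos t ≤ 0`, so `|φ(t)|ⁿ ≤ e^{-ns}`, while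
`g(t)ⁿ ≤ (2t/π) e^{-nst²/2}` integrates in closed form; discarding its (positive) value at `π`
makes the bound strict.
-/

open Real MeasureTheory Set

theorem norm_le_mul_pow_succ_div_of_norm_deriv_le {E : Type*} [NormedAddCommGroup E]
    [NormedSpace ℝ E] {f f' : ℝ → E} {C : ℝ} {k : ℕ} (hf : ∀ x, HasDerivAt f (f' x) x)
    (h0 : f 0 = 0) (hbound : ∀ x, 0 ≤ x → ‖f' x‖ ≤ C * x ^ k) {x : ℝ} (hx : 0 ≤ x) :
    ‖f x‖ ≤ C * x ^ (k + 1) / (k + 1) := by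
  refine image_norm_le_of_norm_deriv_right_le_deriv_boundary (a := 0) (b := x)
    (B := fun y ↦ C * y ^ (k + 1) / (k + 1)) (B' := fun y ↦ C * y ^ k)
    (fun y _ ↦ (hf y).continuousAt.continuousWithinAt) (fun y _ ↦ (hf y).hasDerivWithinAt)
    (by simp [h0]) (fun y ↦ ?_) (fun y hy ↦ hbound y hy.1) ⟨hx, le_rfl⟩
  refine (((hasDerivAt_pow (k + 1) y).const_mul C).div_const ((k : ℝ) + 1)).congr_deriv ?_
  push_cast
  field_simp

theorem norm_le_mul_abs_pow_succ_div_of_norm_deriv_le {E : Type*} [NormedAddCommGroup E]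
    [NormedSpace ℝ E] {f f' : ℝ → E} {C : ℝ} {k : ℕ} (hf : ∀ x, HasDerivAt f (f' x) x)
    (h0 : f 0 = 0) (hbound : ∀ x, ‖f' x‖ ≤ C * |x| ^ k) (x : ℝ) :
    ‖f x‖ ≤ C * |x| ^ (k + 1) / (k + 1) := by
  rcases le_total 0 x with hx | hx
  · rw [abs_of_nonneg hx]
    exact norm_le_mul_pow_succ_div_of_norm_deriv_le hf h0
      (fun y hy ↦ by simpa [abs_of_nonneg hy] using hbound y) hx
  · have hneg (y : ℝ) : HasDerivAt (fun y ↦ f (-y)) (-f' (-y)) y := by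
      exact ((hf (-y)).scomp y (hasDerivAt_neg y)).congr_deriv (by simp)
    simpa [abs_of_nonpos hx] using norm_le_mul_pow_succ_div_of_norm_deriv_le hneg (by simpa)
      (fun y hy ↦ by simpa [abs_of_nonneg hy] using hbound (-y)) (neg_nonneg.2 hx)

theorem hasDerivAt_cexp_I_mul (y : ℝ) :
    HasDerivAt (fun y : ℝ ↦ Complex.exp (Complex.I * y))
      (Complex.I * Complex.exp (Complex.I * y)) y := by
  simpa [mul_comm] using ((hasDerivAt_id (y : ℂ)).const_mul Complex.I).cexp.comp_ofReal

theorem norm_exp_I_mul_sub_one_sub_le (x : ℝ) :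
    ‖Complex.exp (Complex.I * x) - 1 - Complex.I * x‖ ≤ x ^ 2 / 2 := by
  have hderiv (y : ℝ) :
      HasDerivAt (fun y : ℝ ↦ Complex.exp (Complex.I * y) - 1 - Complex.I * y)
        (Complex.I * (Complex.exp (Complex.I * y) - 1)) y :=
    (((hasDerivAt_cexp_I_mul y).sub_const 1).sub
      ((hasDerivAt_id (y : ℂ)).comp_ofReal.const_mul Complex.I)).congr_deriv (by ring)
  simpa [sq_abs, one_add_one_eq_two] using
    norm_le_mul_abs_pow_succ_div_of_norm_deriv_le (C := 1) (k := 1) hderiv (by simp)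
      (fun y ↦ by simpa using Real.norm_exp_I_mul_ofReal_sub_one_le (x := y)) x

theorem norm_exp_I_mul_sub_one_sub_add_le (x : ℝ) :
    ‖Complex.exp (Complex.I * x) - 1 - Complex.I * x + (x : ℂ) ^ 2 / 2‖ ≤ |x| ^ 3 / 6 := by
  have hderiv (y : ℝ) : HasDerivAt
      (fun y : ℝ ↦ Complex.exp (Complex.I * y) - 1 - Complex.I * y + (y : ℂ) ^ 2 / 2)
      (Complex.I * (Complex.exp (Complex.I * y) - 1 - Complex.I * y)) y :=
    ((((hasDerivAt_cexp_I_mul y).sub_const 1).sub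
      ((hasDerivAt_id (y : ℂ)).comp_ofReal.const_mul Complex.I)).add
      (((hasDerivAt_pow 2 (y : ℂ)).comp_ofReal).div_const 2)).congr_deriv
      (by ring_nf; simp [Complex.I_sq])
  have := norm_le_mul_abs_pow_succ_div_of_norm_deriv_le (C := 1 / 2) (k := 2) hderiv
    (by simp) (fun y ↦ by simpa [sq_abs, div_eq_inv_mul] using norm_exp_I_mul_sub_one_sub_le y) x
  convert this using 1
  ring

theorem abs_exp_neg_sub_one_sub_le {x : ℝ} (hx : 0 ≤ x) :
    |exp (-x) - (1 - x)| ≤ x ^ 2 / 2 := by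
  have hderiv (y : ℝ) : HasDerivAt (fun y ↦ exp (-y) - (1 - y)) (1 - exp (-y)) y :=
    ((hasDerivAt_neg y).exp.sub ((hasDerivAt_id y).const_sub 1)).congr_deriv (by simp; ring)
  have hbound (y : ℝ) (hy : 0 ≤ y) : ‖1 - exp (-y)‖ ≤ 1 * y ^ 1 := by
    rw [Real.norm_eq_abs, abs_of_nonneg (by simpa using exp_le_one_iff.2 (neg_nonpos.2 hy))]
    linarith [one_sub_le_exp_neg y]
  simpa [one_add_one_eq_two] using
    norm_le_mul_pow_succ_div_of_norm_deriv_le hderiv (by simp) hbound hx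

theorem norm_pow_sub_pow_le {R : Type*} [SeminormedRing R] [NormOneClass R] {a b : R} {M : ℝ}
    (ha : ‖a‖ ≤ M) (hb : ‖b‖ ≤ M) (n : ℕ) :
    ‖a ^ n - b ^ n‖ ≤ n * M ^ (n - 1) * ‖a - b‖ := by
  induction n with
  | zero => simp
  | succ m ih =>
    have hM : 0 ≤ M := (norm_nonneg a).trans ha
    calc ‖a ^ (m + 1) - b ^ (m + 1)‖ = ‖a ^ m * (a - b) + (a ^ m - b ^ m) * b‖ := by
          simp only [pow_succ, mul_sub, sub_mul, sub_add_sub_cancel]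
      _ ≤ ‖a‖ ^ m * ‖a - b‖ + ‖a ^ m - b ^ m‖ * ‖b‖ :=
          (norm_add_le _ _).trans (add_le_add ((norm_mul_le _ _).trans
            (mul_le_mul_of_nonneg_right (norm_pow_le _ _) (norm_nonneg _))) (norm_mul_le _ _))
      _ ≤ M ^ m * ‖a - b‖ + m * M ^ (m - 1) * ‖a - b‖ * M := by gcongr
      _ = (m + 1 : ℕ) * M ^ (m + 1 - 1) * ‖a - b‖ := by
          rcases m with _ | m
          · simp
          · simp only [Nat.add_sub_cancel, pow_succ]; push_cast; ring

theorem four_div_pi_sq_mul_sq_le_one_sub_cos {t : ℝ} (ht : |t| ≤ π / 2) :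
    4 / π ^ 2 * t ^ 2 ≤ 1 - cos t := by
  wlog ht₀ : 0 ≤ t generalizing t
  · simpa using this (t := -t) (by rwa [abs_neg]) (by linarith)
  rw [abs_of_nonneg ht₀] at ht
  have hθ : 2 * t / π ≤ 1 := by rw [div_le_one pi_pos]; linarith
  have hsin : 2 * t / π * (√2 / 2) ≤ sin (t / 2) := by
    have := strictConcaveOn_sin_Icc.concaveOn.2 (x := 0) (y := π / 4) ⟨le_rfl, pi_pos.le⟩
      ⟨by positivity, by linarith [pi_pos]⟩ (sub_nonneg.2 hθ) (by positivity)
      (sub_add_cancel _ _)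
    simp only [smul_eq_mul, sin_zero, mul_zero, zero_add, sin_pi_div_four] at this
    rwa [show 2 * t / π * (π / 4) = t / 2 by field_simp; ring] at this
  have hsq := pow_le_pow_left₀ (by positivity) hsin 2
  rw [sin_sq_eq_half_sub, show 2 * (t / 2) = t by ring, mul_pow, div_pow,
    div_pow, sq_sqrt zero_le_two] at hsq
  field_simp at hsq ⊢
  linarith

theorem integral_Ioi_pow_mul_exp_neg_mul_sq {b : ℝ} (hb : 0 < b) (k : ℕ) :
    ∫ x in Ioi (0 : ℝ), x ^ k * exp (-b * x ^ 2) =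
      b ^ (-((k : ℝ) + 1) / 2) * Gamma (((k : ℝ) + 1) / 2) / 2 := by
  have := integral_rpow_mul_exp_neg_mul_rpow (q := k) two_pos
    (by linarith [k.cast_nonneg (α := ℝ)]) hb
  simp only [rpow_natCast, rpow_two] at this
  rw [this]
  ring

theorem integral_Ioi_pow_three_mul_exp_neg_mul_sq {b : ℝ} (hb : 0 < b) :
    ∫ x in Ioi (0 : ℝ), x ^ 3 * exp (-b * x ^ 2) = 1 / (2 * b ^ 2) := by
  rw [integral_Ioi_pow_mul_exp_neg_mul_sq hb]
  norm_num [Gamma_two, rpow_neg hb.le]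
  ring

theorem integral_Ioi_pow_four_mul_exp_neg_mul_sq {b : ℝ} (hb : 0 < b) :
    ∫ x in Ioi (0 : ℝ), x ^ 4 * exp (-b * x ^ 2) = 3 * √(π / b) / (8 * b ^ 2) := by
  rw [integral_Ioi_pow_mul_exp_neg_mul_sq hb]
  have hΓ : Gamma (5 / 2) = 3 / 4 * √π := by
    rw [show (5 / 2 : ℝ) = 1 / 2 + 1 + 1 by norm_num, Gamma_add_one (by norm_num),
      Gamma_add_one (by norm_num), Gamma_one_half_eq]
    ring
  have hb' : b ^ (-(5 / 2 : ℝ)) = 1 / (b ^ 2 * √b) := by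
    rw [rpow_neg hb.le, show (5 / 2 : ℝ) = 2 + 1 / 2 by norm_num, rpow_add hb, sqrt_eq_rpow]
    norm_num
  norm_num [hΓ, hb', sqrt_div' _ hb.le]
  ring

theorem intervalIntegral_pow_mul_exp_neg_mul_sq_le {b : ℝ} (hb : 0 < b) (k : ℕ) {c : ℝ}
    (hc : 0 ≤ c) :
    ∫ x in 0..c, x ^ k * exp (-b * x ^ 2) ≤ ∫ x in Ioi 0, x ^ k * exp (-b * x ^ 2) := by
  have hint : IntegrableOn (fun x : ℝ ↦ x ^ k * exp (-b * x ^ 2)) (Ioi 0) := by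
    simpa [rpow_natCast] using
      integrableOn_rpow_mul_exp_neg_mul_sq hb (s := k) (by linarith [k.cast_nonneg (α := ℝ)])
  rw [intervalIntegral.integral_of_le hc]
  refine setIntegral_mono_set hint ?_ (Ioc_subset_Ioi_self.eventuallyLE)
  filter_upwards [ae_restrict_mem measurableSet_Ioi] with x hx
  exact mul_nonneg (pow_nonneg (le_of_lt hx) k) (exp_pos _).le

theorem integral_Icc_neg_eq_two_mul_of_even {f : ℝ → ℝ} (hf : ∀ x, f (-x) = f x) {a : ℝ}
    (ha : 0 ≤ a) (hint : IntervalIntegrable f volume (-a) a) :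
    ∫ x in Icc (-a) a, f x = 2 * ∫ x in 0..a, f x := by
  have hsub (b c : ℝ) (hb : b ∈ Icc (-a) a) (hc : c ∈ Icc (-a) a) :
      IntervalIntegrable f volume b c :=
    hint.mono_set (uIcc_subset_uIcc (by simpa [uIcc_of_le (by linarith : -a ≤ a)])
      (by simpa [uIcc_of_le (by linarith : -a ≤ a)]))
  have hleft : ∫ x in (-a)..0, f x = ∫ x in 0..a, f x := by
    simpa [hf] using (intervalIntegral.integral_comp_neg (a := 0) (b := a) f).symm
  rw [integral_Icc_eq_integral_Ioc, ← intervalIntegral.integral_of_le (by linarith),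
    ← intervalIntegral.integral_add_adjacent_intervals (b := 0)
      (hsub _ _ ⟨le_rfl, by linarith⟩ ⟨by linarith, ha⟩)
      (hsub _ _ ⟨by linarith, ha⟩ ⟨by linarith, le_rfl⟩), hleft, two_mul]

theorem intervalIntegral_mul_exp_neg_mul_sq {b : ℝ} (hb : 0 < b) (a c : ℝ) :
    ∫ t in a..c, t * exp (-b * t ^ 2) = (exp (-b * a ^ 2) - exp (-b * c ^ 2)) / (2 * b) := by
  have hderiv (t : ℝ) : HasDerivAt (fun t ↦ -exp (-b * t ^ 2) / (2 * b))
      (t * exp (-b * t ^ 2)) t :=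
    ((((hasDerivAt_pow 2 t).const_mul (-b)).exp).neg.div_const (2 * b)).congr_deriv
      (by field_simp; ring)
  rw [intervalIntegral.integral_eq_sub_of_hasDerivAt (fun t _ ↦ hderiv t)
    (Continuous.intervalIntegrable (by fun_prop) _ _)]
  ring

noncomputable def centeredBernoulliCharFun (p t : ℝ) : ℂ :=
  (1 - p : ℂ) * Complex.exp (-Complex.I * t * p) +
    (p : ℂ) * Complex.exp (Complex.I * t * (1 - p))

theorem centeredBernoulliCharFun_neg (p t : ℝ) :
    centeredBernoulliCharFun p (-t) = (starRingEnd ℂ) (centeredBernoulliCharFun p t) := by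
  simp [centeredBernoulliCharFun, ← Complex.exp_conj]

theorem norm_centeredBernoulliCharFun_sq (p t : ℝ) :
    ‖centeredBernoulliCharFun p t‖ ^ 2 = 1 - 2 * (p * (1 - p)) * (1 - cos t) := by
  have hfactor : centeredBernoulliCharFun p t =
      Complex.exp (-t * p * Complex.I) * (1 - p + p * Complex.exp (t * Complex.I)) := by
    rw [centeredBernoulliCharFun, mul_add, mul_left_comm, ← Complex.exp_add]
    ring_nf
  rw [hfactor, norm_mul, ← Complex.ofReal_neg, ← Complex.ofReal_mul,
    Complex.norm_exp_ofReal_mul_I, one_mul, Complex.exp_mul_I, Complex.sq_norm,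
    Complex.normSq_apply]
  simp [← Complex.ofReal_cos, ← Complex.ofReal_sin]
  linear_combination (p ^ 2) * sin_sq_add_cos_sq t

theorem norm_centeredBernoulliCharFun_le (p t : ℝ) :
    ‖centeredBernoulliCharFun p t‖ ≤ exp (-(p * (1 - p) * (1 - cos t))) := by
  refine (pow_le_pow_iff_left₀ (norm_nonneg _) (exp_pos _).le two_ne_zero).1 ?_
  rw [norm_centeredBernoulliCharFun_sq, ← exp_nat_mul, Nat.cast_ofNat]
  linarith [add_one_le_exp (2 * -(p * (1 - p) * (1 - cos t)))]

theorem norm_centeredBernoulliCharFun_sub_exp_le {p : ℝ} (hp₀ : 0 ≤ p) (hp₁ : p ≤ 1)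
    (t : ℝ) :
    ‖centeredBernoulliCharFun p t - (exp (-(p * (1 - p) * t ^ 2) / 2) : ℂ)‖ ≤
      p * (1 - p) * (p ^ 2 + (1 - p) ^ 2) * |t| ^ 3 / 6 + (p * (1 - p)) ^ 2 * t ^ 4 / 8 := by
  set T : ℝ → ℂ := fun x ↦
    Complex.exp (Complex.I * x) - 1 - Complex.I * x + (x : ℂ) ^ 2 / 2
  set u : ℝ := p * (1 - p) * t ^ 2 / 2
  -- The linear Taylor terms cancel and the quadratic ones add up to `-u`, leaving the remainders.
  have htaylor : centeredBernoulliCharFun p t - (1 - u : ℝ) =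
      ((1 - p : ℝ) : ℂ) * T (-(t * p)) + (p : ℂ) * T (t * (1 - p)) := by
    simp only [centeredBernoulliCharFun, T, u]
    push_cast
    ring_nf
  have hT : ‖centeredBernoulliCharFun p t - (1 - u : ℝ)‖ ≤
      p * (1 - p) * (p ^ 2 + (1 - p) ^ 2) * |t| ^ 3 / 6 := by
    rw [htaylor]
    refine (norm_add_le _ _).trans ?_
    rw [norm_mul, norm_mul, Complex.norm_real, Complex.norm_real, Real.norm_of_nonneg hp₀,
      Real.norm_of_nonneg (by linarith)]
    have h₁ := norm_exp_I_mul_sub_one_sub_add_le (-(t * p))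
    have h₂ := norm_exp_I_mul_sub_one_sub_add_le (t * (1 - p))
    rw [abs_neg, abs_mul, abs_of_nonneg hp₀] at h₁
    rw [abs_mul, abs_of_nonneg (by linarith : 0 ≤ 1 - p)] at h₂
    calc (1 - p) * ‖T (-(t * p))‖ + p * ‖T (t * (1 - p))‖
        ≤ (1 - p) * ((|t| * p) ^ 3 / 6) + p * ((|t| * (1 - p)) ^ 3 / 6) := by
          gcongr
      _ = _ := by ring
  have hexp : ‖((1 - u : ℝ) : ℂ) - (exp (-(p * (1 - p) * t ^ 2) / 2) : ℂ)‖ ≤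
      (p * (1 - p)) ^ 2 * t ^ 4 / 8 := by
    rw [← Complex.ofReal_sub, Complex.norm_real, Real.norm_eq_abs, abs_sub_comm, neg_div]
    calc |exp (-u) - (1 - u)| ≤ u ^ 2 / 2 := abs_exp_neg_sub_one_sub_le (by positivity)
      _ = _ := by ring
  calc _ ≤ _ := norm_sub_le_norm_sub_add_norm_sub _ _ _
    _ ≤ _ := add_le_add hT hexp

/-- The distance at `t` between the characteristic functions of the centred binomial law
`B(n, p) - np` and of the normal law with the same variance `np(1 - p)`. -/
noncomputable def binomialNormalCharFunGap (p : ℝ) (n : ℕ) (t : ℝ) : ℝ :=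
  ‖centeredBernoulliCharFun p t ^ n - (exp (-(n * p * (1 - p) * t ^ 2) / 2) : ℂ)‖

theorem binomialNormalCharFunGap_neg (p : ℝ) (n : ℕ) (t : ℝ) :
    binomialNormalCharFunGap p n (-t) = binomialNormalCharFunGap p n t := by
  rw [binomialNormalCharFunGap, binomialNormalCharFunGap, centeredBernoulliCharFun_neg, neg_sq,
    ← Complex.norm_conj, map_sub, map_pow, Complex.conj_conj, Complex.conj_ofReal]

theorem continuous_binomialNormalCharFunGap (p : ℝ) (n : ℕ) :
    Continuous (binomialNormalCharFunGap p n) := by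
  unfold binomialNormalCharFunGap centeredBernoulliCharFun
  fun_prop

theorem ofReal_exp_neg_mul_sq_div_two_eq_pow (p : ℝ) (n : ℕ) (t : ℝ) :
    (exp (-(n * p * (1 - p) * t ^ 2) / 2) : ℂ) =
      (exp (-(p * (1 - p) * t ^ 2) / 2) : ℂ) ^ n := by
  rw [← Complex.ofReal_pow, ← exp_nat_mul]
  ring_nf

theorem binomialNormalCharFunGap_le_of_abs_le_pi_div_two {p : ℝ} (hp₀ : 0 ≤ p)
    (hp₁ : p ≤ 1) {n : ℕ} (hn : 1 ≤ n) {t : ℝ} (ht : |t| ≤ π / 2) :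
    binomialNormalCharFunGap p n t ≤
      n * (p * (1 - p) * (p ^ 2 + (1 - p) ^ 2) / 6 *
          (|t| ^ 3 * exp (-(4 * (n - 1) * (p * (1 - p)) / π ^ 2) * t ^ 2)) +
        (p * (1 - p)) ^ 2 / 8 *
          (t ^ 4 * exp (-(4 * (n - 1) * (p * (1 - p)) / π ^ 2) * t ^ 2))) := by
  have hs : 0 ≤ p * (1 - p) := mul_nonneg hp₀ (by linarith)
  set M := exp (-(4 * (p * (1 - p)) / π ^ 2) * t ^ 2)
  have hφ : ‖centeredBernoulliCharFun p t‖ ≤ M := by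
    refine (norm_centeredBernoulliCharFun_le p t).trans (exp_le_exp.2 ?_)
    have := mul_le_mul_of_nonneg_left (four_div_pi_sq_mul_sq_le_one_sub_cos ht) hs
    linarith [show 4 * (p * (1 - p)) / π ^ 2 * t ^ 2 = p * (1 - p) * (4 / π ^ 2 * t ^ 2) by ring]
  have hg : ‖(exp (-(p * (1 - p) * t ^ 2) / 2) : ℂ)‖ ≤ M := by
    rw [Complex.norm_real, norm_of_nonneg (exp_pos _).le]
    refine exp_le_exp.2 ?_
    have h : 4 / π ^ 2 ≤ 1 / 2 := by
      rw [div_le_div_iff₀ (by positivity) two_pos]; nlinarith [pi_gt_three]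
    have := mul_le_mul_of_nonneg_left h (mul_nonneg hs (sq_nonneg t))
    linarith [show 4 * (p * (1 - p)) / π ^ 2 * t ^ 2 = p * (1 - p) * t ^ 2 * (4 / π ^ 2) by ring]
  have hMpow : M ^ (n - 1) = exp (-(4 * (n - 1) * (p * (1 - p)) / π ^ 2) * t ^ 2) := by
    rw [← exp_nat_mul, Nat.cast_sub hn]
    ring_nf
  rw [binomialNormalCharFunGap, ofReal_exp_neg_mul_sq_div_two_eq_pow]
  refine (norm_pow_sub_pow_le hφ hg n).trans ?_
  rw [hMpow]
  have := norm_centeredBernoulliCharFun_sub_exp_le hp₀ hp₁ t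
  have hpos : 0 ≤ (n : ℝ) * exp (-(4 * (n - 1) * (p * (1 - p)) / π ^ 2) * t ^ 2) := by
    positivity
  nlinarith [mul_le_mul_of_nonneg_left this hpos]

theorem binomialNormalCharFunGap_le_of_cos_nonpos {p : ℝ} (hp₀ : 0 ≤ p) (hp₁ : p ≤ 1)
    (n : ℕ) {t : ℝ} (ht : cos t ≤ 0) :
    binomialNormalCharFunGap p n t ≤
      exp (-(n * p * (1 - p))) + exp (-(n * p * (1 - p) / 2) * t ^ 2) := by
  have hs : 0 ≤ p * (1 - p) := mul_nonneg hp₀ (by linarith)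
  have hφ : ‖centeredBernoulliCharFun p t‖ ≤ exp (-(p * (1 - p))) :=
    (norm_centeredBernoulliCharFun_le p t).trans (exp_le_exp.2 (by nlinarith))
  refine (norm_sub_le _ _).trans (add_le_add ?_ (le_of_eq ?_))
  · rw [norm_pow]
    refine (pow_le_pow_left₀ (norm_nonneg _) hφ n).trans (le_of_eq ?_)
    rw [← exp_nat_mul]
    ring_nf
  · rw [Complex.norm_real, norm_of_nonneg (exp_pos _).le]
    ring_nf

-- The bound on `|t| ≤ π/2` given by the Gaussian moments with `A = 4(n - 1)s/π²`, put in the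
-- form `f(p, n)/σ²` of the statement (with `s = pq`, `w = p² + q²`).
theorem two_mul_gaussian_moment_bound_eq {s w n : ℝ} (hs : 0 < s) (hn : 1 < n) :
    2 * (n * (s * w / 6 * (1 / (2 * (4 * (n - 1) * s / π ^ 2) ^ 2)) +
        s ^ 2 / 8 * (3 * √(π / (4 * (n - 1) * s / π ^ 2)) /
          (8 * (4 * (n - 1) * s / π ^ 2) ^ 2)))) =
      1 / (n * s) * (w * (π ^ 4 / 96) * (n / (n - 1)) ^ 2 +
        3 * π ^ 5 * √(π * s) / (2 ^ 10 * √n) * (n / (n - 1)) ^ ((5 : ℝ) / 2)) := by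
  obtain ⟨a, ha, rfl⟩ : ∃ a, 0 < a ∧ s = a ^ 2 :=
    ⟨√s, sqrt_pos.2 hs, (sq_sqrt hs.le).symm⟩
  have hn₁ : 0 < n - 1 := by linarith
  have hrpow : (n / (n - 1)) ^ ((5 : ℝ) / 2) = (n / (n - 1)) ^ 2 * (√n / √(n - 1)) := by
    rw [← sqrt_div' _ hn₁.le, sqrt_eq_rpow, ← rpow_natCast, ← rpow_add (by positivity)]
    norm_num
  have hsqrt : √(π / (4 * (n - 1) * a ^ 2 / π ^ 2)) = π * √π / (2 * √(n - 1) * a) := by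
    rw [div_div_eq_mul_div, sqrt_div' _ (by positivity), sqrt_mul' _ (by positivity),
      sqrt_mul (by positivity), sqrt_mul (by positivity), sqrt_sq pi_pos.le, sqrt_sq ha.le,
      show (4 : ℝ) = 2 ^ 2 by norm_num, sqrt_sq two_pos.le]
    ring
  have : 0 < √n := sqrt_pos.2 (by linarith)
  have : 0 < √(n - 1) := sqrt_pos.2 hn₁
  rw [hrpow, hsqrt, sqrt_mul pi_pos.le, sqrt_sq ha.le]
  field_simp
  ring

theorem two_mul_integral_binomialNormalCharFunGap_le {p : ℝ} (hp₀ : 0 < p) (hp₁ : p < 1)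
    {n : ℕ} (hn : 2 ≤ n) :
    2 * ∫ t in 0..π / 2, binomialNormalCharFunGap p n t ≤
      1 / (n * p * (1 - p)) *
        ((p ^ 2 + (1 - p) ^ 2) * (π ^ 4 / 96) * ((n : ℝ) / (n - 1)) ^ 2 +
          3 * π ^ 5 * √(π * p * (1 - p)) / (2 ^ 10 * √n) *
            ((n : ℝ) / (n - 1)) ^ ((5 : ℝ) / 2)) := by
  have hs : 0 < p * (1 - p) := mul_pos hp₀ (by linarith)
  have hn₁ : (1 : ℝ) < n := by exact_mod_cast hn
  set A := 4 * (n - 1) * (p * (1 - p)) / π ^ 2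
  have hA : 0 < A := div_pos (mul_pos (mul_pos four_pos (by linarith)) hs) (by positivity)
  set c₃ := p * (1 - p) * (p ^ 2 + (1 - p) ^ 2) / 6
  set c₄ := (p * (1 - p)) ^ 2 / 8
  have hint (k : ℕ) {a b : ℝ} :
      IntervalIntegrable (fun t ↦ t ^ k * exp (-A * t ^ 2)) volume a b :=
    (by fun_prop : Continuous _).intervalIntegrable a b
  have hbound : ∫ t in 0..π / 2, binomialNormalCharFunGap p n t ≤
      n * (c₃ * (1 / (2 * A ^ 2)) + c₄ * (3 * √(π / A) / (8 * A ^ 2))) := calc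
    _ ≤ ∫ t in 0..π / 2,
          n * (c₃ * (t ^ 3 * exp (-A * t ^ 2)) + c₄ * (t ^ 4 * exp (-A * t ^ 2))) := by
        refine intervalIntegral.integral_mono_on (by positivity)
          ((continuous_binomialNormalCharFunGap p n).intervalIntegrable _ _)
          ((((hint 3).const_mul c₃).add ((hint 4).const_mul c₄)).const_mul _) fun t ht ↦ ?_
        have ht' : |t| ≤ π / 2 := abs_le.2 ⟨by linarith [ht.1, pi_pos], ht.2⟩
        simpa [abs_of_nonneg ht.1, A, neg_div, neg_mul] using
          binomialNormalCharFunGap_le_of_abs_le_pi_div_two hp₀.le hp₁.le (by omega) ht'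
    _ = n * (c₃ * ∫ t in 0..π / 2, t ^ 3 * exp (-A * t ^ 2)) +
          n * (c₄ * ∫ t in 0..π / 2, t ^ 4 * exp (-A * t ^ 2)) := by
        rw [intervalIntegral.integral_const_mul,
          intervalIntegral.integral_add ((hint 3).const_mul c₃) ((hint 4).const_mul c₄),
          intervalIntegral.integral_const_mul, intervalIntegral.integral_const_mul, mul_add]
    _ ≤ n * (c₃ * ∫ t in Ioi 0, t ^ 3 * exp (-A * t ^ 2)) +
          n * (c₄ * ∫ t in Ioi 0, t ^ 4 * exp (-A * t ^ 2)) := by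
        gcongr <;> exact intervalIntegral_pow_mul_exp_neg_mul_sq_le hA _ (by positivity)
    _ = _ := by
        rw [integral_Ioi_pow_three_mul_exp_neg_mul_sq hA,
          integral_Ioi_pow_four_mul_exp_neg_mul_sq hA]
        ring
  rw [mul_assoc (n : ℝ) p, mul_assoc π, ← two_mul_gaussian_moment_bound_eq hs hn₁]
  exact mul_le_mul_of_nonneg_left hbound zero_le_two

theorem two_mul_integral_binomialNormalCharFunGap_lt {p : ℝ} (hp₀ : 0 < p) (hp₁ : p < 1)
    {n : ℕ} (hn : 1 ≤ n) :
    2 * ∫ t in π / 2..π, binomialNormalCharFunGap p n t <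
      1 / (n * p * (1 - p)) * (π * (n * p * (1 - p)) * exp (-(n * p * (1 - p))) +
        4 / π * exp (-π ^ 2 * (n * p * (1 - p)) / 8)) := by
  set σ₂ := (n : ℝ) * p * (1 - p)
  have hσ₂ : 0 < σ₂ := mul_pos (mul_pos (by exact_mod_cast hn) hp₀) (by linarith)
  set b := σ₂ / 2
  have hb : 0 < b := half_pos hσ₂
  have hcont : Continuous fun t ↦ t * exp (-b * t ^ 2) := by fun_prop
  calc 2 * ∫ t in π / 2..π, binomialNormalCharFunGap p n t
      ≤ 2 * ∫ t in π / 2..π, (exp (-σ₂) + 2 / π * (t * exp (-b * t ^ 2))) := by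
        gcongr
        refine intervalIntegral.integral_mono_on (by linarith [pi_pos])
          ((continuous_binomialNormalCharFunGap p n).intervalIntegrable _ _)
          (intervalIntegrable_const.add ((hcont.intervalIntegrable _ _).const_mul _))
          fun t ht ↦ ?_
        have hcos : cos t ≤ 0 :=
          cos_nonpos_of_pi_div_two_le_of_le ht.1 (by linarith [ht.2, pi_pos])
        have hlin : 1 ≤ 2 / π * t := by
          rw [div_mul_eq_mul_div, le_div_iff₀ pi_pos]; linarith [ht.1]
        have := binomialNormalCharFunGap_le_of_cos_nonpos hp₀.le hp₁.le n hcos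
        nlinarith [exp_pos (-b * t ^ 2)]
    _ = π * exp (-σ₂) + 4 / π * ((exp (-b * (π / 2) ^ 2) - exp (-b * π ^ 2)) / (2 * b)) := by
        rw [intervalIntegral.integral_add intervalIntegrable_const
          ((hcont.intervalIntegrable _ _).const_mul _), intervalIntegral.integral_const,
          intervalIntegral.integral_const_mul, intervalIntegral_mul_exp_neg_mul_sq hb, smul_eq_mul]
        ring
    _ < π * exp (-σ₂) + 4 / π * (exp (-b * (π / 2) ^ 2) / (2 * b)) := by
        gcongr
        linarith [exp_pos (-b * π ^ 2)]
    _ = _ := by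
        rw [show -b * (π / 2) ^ 2 = -π ^ 2 * σ₂ / 8 by ring]
        field_simp
        ring

theorem charfun_power_minus_gaussian_integral_bound
    (p : ℝ) (hp : p ∈ Set.Ioo (0 : ℝ) 1) (n : ℕ) (hn : 2 ≤ n)
    (f : ℝ → ℂ)
    (hf : ∀ t : ℝ, f t =
      (1 - p : ℂ) * Complex.exp (-Complex.I * t * p) +
        (p : ℂ) * Complex.exp (Complex.I * t * (1 - p))) :
    (∫ t in Set.Icc (-Real.pi) Real.pi,
        ‖f t ^ n - (Real.exp (-(n * p * (1 - p) * t ^ 2) / 2) : ℂ)‖) <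
      (1 / (n * p * (1 - p))) *
        (((p ^ 2 + (1 - p) ^ 2) * (Real.pi ^ 4 / 96) * ((n : ℝ) / (n - 1)) ^ 2 +
            (3 * Real.pi ^ 5 * Real.sqrt (Real.pi * p * (1 - p)) /
              (2 ^ 10 * Real.sqrt n)) * ((n : ℝ) / (n - 1)) ^ ((5 : ℝ) / 2)) +
          Real.pi * (n * p * (1 - p)) * Real.exp (-(n * p * (1 - p))) +
          (4 / Real.pi) * Real.exp (-Real.pi ^ 2 * (n * p * (1 - p)) / 8)) := by
  obtain ⟨hp₀, hp₁⟩ := hp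
  obtain rfl : f = centeredBernoulliCharFun p := funext hf
  have hint (a b : ℝ) : IntervalIntegrable (binomialNormalCharFunGap p n) volume a b :=
    (continuous_binomialNormalCharFunGap p n).intervalIntegrable a b
  change ∫ t in Icc (-π) π, binomialNormalCharFunGap p n t < _
  rw [integral_Icc_neg_eq_two_mul_of_even (binomialNormalCharFunGap_neg p n) pi_pos.le (hint _ _),
    ← intervalIntegral.integral_add_adjacent_intervals (hint 0 (π / 2)) (hint (π / 2) π),
    mul_add, add_assoc, mul_add]
  exact add_lt_add_of_le_of_lt (two_mul_integral_binomialNormalCharFunGap_le hp₀ hp₁ hn)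
    (two_mul_integral_binomialNormalCharFunGap_lt hp₀ hp₁ (by omega))
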